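/- arXiv:2011.10485 — 3 statements merged into one kernel-verified Lean document; each statement's English description precedes it below -/
import Mathlib

section
/- In the two-bank system where bank u has external assets 2 and debts of weight 2 to each of banks v and w, bank v has external assets 1 and no liabilities, bank w has external assets 0 and a CDS of weight 2 to v with reference entity u, the unique equilibrium recovery rate vector is r_u = 1/2, r_v = 1, r_w = 1. -/
/-- The paper's recovery-rate function: `R(a,l) = 1` if `a ≥ l`, else `a/l` (so `R(a,0)=1`). -/
noncomputable def Rfun (a l : ℝ) : ℝ := if a ≥ l then 1 else a / l

theorem Rfun_of_le {a l : ℝ} (h : l ≤ a) : Rfun a l = 1 := if_pos h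

theorem Rfun_of_lt {a l : ℝ} (h : a < l) : Rfun a l = a / l := if_neg (not_le.mpr h)

theorem stmt0_general (ru rv rw : ℝ) :
    (ru = Rfun 2 4 ∧
     rv = Rfun (1 + 2 * ru + rw * (2 * (1 - ru))) 0 ∧
     rw = Rfun (2 * ru) (2 * (1 - ru)))
    ↔ (ru = 1/2 ∧ rv = 1 ∧ rw = 1) := by
  constructor
  · rintro ⟨hu, hv, hw⟩
    have hu' : ru = 1/2 := by rw [hu, Rfun_of_lt (by norm_num)]; norm_num
    have hw' : rw = 1 := by rw [hw, hu', Rfun_of_le (by norm_num)]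
    refine ⟨hu', ?_, hw'⟩
    rw [hv, Rfun_of_le (by rw [hu', hw']; norm_num)]
  · rintro ⟨rfl, rfl, rfl⟩
    refine ⟨?_, (Rfun_of_le (by norm_num)).symm, (Rfun_of_le (by norm_num)).symm⟩
    rw [Rfun_of_lt (by norm_num)]; norm_num

/-- in the system where `u` has external assets 2 and debts of weight 2 to `v` and
`w`, `v` has external assets 1 and no liabilities, and `w` has a CDS of weight 2 to `v` with
reference entity `u`, the unique equilibrium is `r_u = 1/2, r_v = 1, r_w = 1`.
Here `a_u = 2, l_u = 4`; `a_v = 1 + 2 r_u + r_w · 2(1-r_u), l_v = 0`;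
`a_w = 2 r_u, l_w = 2(1-r_u)`. -/
theorem stmt0 (ru rv rw : ℝ)
    (hru : ru ∈ Set.Icc (0:ℝ) 1) (hrv : rv ∈ Set.Icc (0:ℝ) 1) (hrw : rw ∈ Set.Icc (0:ℝ) 1) :
    (ru = Rfun 2 4 ∧
     rv = Rfun (1 + 2 * ru + rw * (2 * (1 - ru))) 0 ∧
     rw = Rfun (2 * ru) (2 * (1 - ru)))
    ↔ (ru = 1/2 ∧ rv = 1 ∧ rw = 1) :=
  stmt0_general ru rv rw
end

section
/- In the branching gadget under the sequential update model starting from r_u = r_v = 1, both banks are initially updatable; if u updates first the process stabilizes after exactly one step at (r_u, r_v) = (0,1), and if v updates first it stabilizes after exactly one step at (1,0). In particular, the equilibrium (1/2, 1/2) is not reachable by any sequence of sequential updates from the initial state. -/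
namespace Branch

/-- Asset of bank `u` (index `true`) resp. `v` (index `false`) in the branching gadget. -/
def asset (w : Bool) (r : ℝ × ℝ) : ℝ := if w then 1 - r.2 else 1 - r.1

def updatable (w : Bool) (r : ℝ × ℝ) : Prop :=
  (if w then r.1 else r.2) ≠ min 1 (asset w r)

noncomputable def upd (w : Bool) (r : ℝ × ℝ) : ℝ × ℝ :=
  if w then (min 1 (asset w r), r.2) else (r.1, min 1 (asset w r))

inductive Reachable : ℝ × ℝ → Prop
  | init : Reachable (1, 1)
  | step (r : ℝ × ℝ) (w : Bool) : Reachable r → updatable w r → Reachable (upd w r)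

def Stable (r : ℝ × ℝ) : Prop := ∀ w, ¬ updatable w r

theorem updatable_one_one (w : Bool) : updatable w (1, 1) := by
  cases w <;> norm_num [updatable, asset]

theorem upd_true_one_one : upd true (1, 1) = (0, 1) := by
  norm_num [upd, asset]

theorem upd_false_one_one : upd false (1, 1) = (1, 0) := by
  norm_num [upd, asset]

theorem stable_zero_one : Stable (0, 1) := by
  intro w; cases w <;> norm_num [updatable, asset]

theorem stable_one_zero : Stable (1, 0) := by
  intro w; cases w <;> norm_num [updatable, asset]

-- The first update from `(1, 1)` lands in a stable state, so no run goes further than one step.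
theorem Reachable.eq_one_one_or_eq_zero_one_or_eq_one_zero {r : ℝ × ℝ} (h : Reachable r) :
    r = (1, 1) ∨ r = (0, 1) ∨ r = (1, 0) := by
  induction h with
  | init => exact Or.inl rfl
  | step r w _ hw ih =>
    rcases ih with rfl | rfl | rfl
    · cases w
      · exact Or.inr (Or.inr upd_false_one_one)
      · exact Or.inr (Or.inl upd_true_one_one)
    · exact absurd hw (stable_zero_one w)
    · exact absurd hw (stable_one_zero w)

theorem not_reachable_half_half : ¬ Reachable (1 / 2, 1 / 2) := by
  intro h
  rcases h.eq_one_one_or_eq_zero_one_or_eq_one_zero with h | h | h <;> norm_num [Prod.ext_iff] at h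

end Branch

/-- in the branching gadget starting from `(1,1)`, both banks are updatable;
if `u` updates first the process stabilizes after one step at `(0,1)`, if `v` updates first
it stabilizes after one step at `(1,0)`; and the equilibrium `(1/2,1/2)` is not reachable. -/
theorem stmt6 :
    Branch.updatable true (1, 1) ∧ Branch.updatable false (1, 1) ∧
    Branch.upd true (1, 1) = ((0:ℝ), (1:ℝ)) ∧
    (∀ w, ¬ Branch.updatable w ((0:ℝ), (1:ℝ))) ∧
    Branch.upd false (1, 1) = ((1:ℝ), (0:ℝ)) ∧
    (∀ w, ¬ Branch.updatable w ((1:ℝ), (0:ℝ))) ∧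
    ¬ Branch.Reachable ((1/2 : ℝ), (1/2 : ℝ)) :=
  ⟨Branch.updatable_one_one true, Branch.updatable_one_one false, Branch.upd_true_one_one,
    Branch.stable_zero_one, Branch.upd_false_one_one, Branch.stable_one_zero,
    Branch.not_reachable_half_half⟩
end

section
/- Condition gadget correctness: let z₁,…,z_c and z′₁,…,z′_d be banks with recovery rates in {0,1}. Bank u has assets a_u = Σᵢ (1 − r_{zᵢ}) and liabilities l_u = c + Σⱼ (1 − r_{z′ⱼ}); bank w has liability 1 and receives payment (c+1)·(1 − min(1, a_u/l_u)) from a CDS referencing u. Then w's assets are 0 (so w must default) if and only if r_{z₁} = ⋯ = r_{z_c} = 0 and r_{z′₁} = ⋯ = r_{z′_d} = 1; in all other cases w's assets are at least 1 (so w does not default). -/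
/-- condition gadget correctness: let `z₁,…,z_c` and `z′₁,…,z′_d` have
recovery rates in `{0,1}`, let `r_u = min(1, (Σᵢ(1−r_{zᵢ})) / (c + Σⱼ(1−r_{z′ⱼ})))` and let
`w`'s assets be `a_w = (c+1)(1 − r_u)` (against liability 1).  Then `a_w < 1 ↔ a_w = 0 ↔`
(all `r_{zᵢ} = 0` and all `r_{z′ⱼ} = 1`); in all other cases `a_w ≥ 1`. -/
theorem stmt13 (c d : ℕ) (hc : 1 ≤ c) (z : Fin c → ℝ) (z' : Fin d → ℝ)
    (hz : ∀ i, z i = 0 ∨ z i = 1) (hz' : ∀ j, z' j = 0 ∨ z' j = 1) :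
    let ru : ℝ := min 1 ((∑ i, (1 - z i)) / ((c : ℝ) + ∑ j, (1 - z' j)))
    let aw : ℝ := ((c : ℝ) + 1) * (1 - ru)
    (aw < 1 ↔ aw = 0) ∧
    (aw = 0 ↔ ((∀ i, z i = 0) ∧ (∀ j, z' j = 1))) ∧
    (¬ ((∀ i, z i = 0) ∧ (∀ j, z' j = 1)) → 1 ≤ aw) := by
  intro ru aw
  have hc1 : (1:ℝ) ≤ (c:ℝ) := by exact_mod_cast hc
  have hT : (0:ℝ) ≤ ∑ j, (1 - z' j) :=
    Finset.sum_nonneg (fun j _ => by rcases hz' j with h|h <;> simp [h])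
  have hden : (0:ℝ) < (c:ℝ) + ∑ j, (1 - z' j) := by linarith
  have hru : ru = min 1 ((∑ i, (1 - z i)) / ((c : ℝ) + ∑ j, (1 - z' j))) := rfl
  have haw : aw = ((c : ℝ) + 1) * (1 - ru) := rfl
  -- forward: P → aw = 0
  have hfwd : ((∀ i, z i = 0) ∧ (∀ j, z' j = 1)) → aw = 0 := by
    rintro ⟨h1, h2⟩
    have hs : (∑ i, (1 - z i)) = (c:ℝ) := by simp [h1]
    have ht : (∑ j, (1 - z' j)) = 0 := by simp [h2]
    have : ru = 1 := by
      rw [hru, hs, ht]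
      rw [add_zero, div_self (by linarith)]
      simp
    rw [haw, this]; ring
  -- otherwise: aw ≥ 1
  have hge : ¬ ((∀ i, z i = 0) ∧ (∀ j, z' j = 1)) → 1 ≤ aw := by
    intro hnp
    have hbound : ru ≤ (c:ℝ) / ((c:ℝ) + 1) := by
      rw [hru]
      refine le_trans (min_le_right _ _) ?_
      rw [div_le_div_iff₀ hden (by linarith)]
      -- need: S * (c+1) ≤ c * (c + T)
      rcases not_and_or.mp hnp with h | h
      · -- some z i = 1, so S ≤ c - 1
        push_neg at h
        obtain ⟨i0, hi0⟩ := h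
        have hzi0 : z i0 = 1 := (hz i0).resolve_left hi0
        have hS : (∑ i, (1 - z i)) ≤ (c:ℝ) - 1 := by
          rw [← Finset.add_sum_erase _ _ (Finset.mem_univ i0), hzi0]
          have hle : (∑ i ∈ Finset.univ.erase i0, (1 - z i)) ≤
              ∑ i ∈ Finset.univ.erase i0, (1:ℝ) :=
            Finset.sum_le_sum (fun i _ => by rcases hz i with h|h <;> simp [h])
          have hcard : (∑ i ∈ Finset.univ.erase i0, (1:ℝ)) = (c:ℝ) - 1 := by
            rw [Finset.sum_const]
            simp only [Finset.card_erase_of_mem (Finset.mem_univ i0), Finset.card_univ,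
              Fintype.card_fin, nsmul_eq_mul, mul_one]
            rw [Nat.cast_sub hc]
            simp
          linarith
        nlinarith
      · -- some z' j = 0, so T ≥ 1
        push_neg at h
        obtain ⟨j0, hj0⟩ := h
        have hzj0 : z' j0 = 0 := (hz' j0).resolve_right hj0
        have hT1 : (1:ℝ) ≤ ∑ j, (1 - z' j) := by
          rw [← Finset.add_sum_erase _ _ (Finset.mem_univ j0), hzj0]
          have : (0:ℝ) ≤ ∑ j ∈ Finset.univ.erase j0, (1 - z' j) :=
            Finset.sum_nonneg (fun j _ => by rcases hz' j with h|h <;> simp [h])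
          linarith
        have hS : (∑ i, (1 - z i)) ≤ (c:ℝ) := by
          have hle : (∑ i, (1 - z i)) ≤ ∑ i : Fin c, (1:ℝ) :=
            Finset.sum_le_sum (fun i _ => by rcases hz i with h|h <;> simp [h])
          simpa using hle
        nlinarith
    rw [haw]
    have hmul : (c:ℝ) / ((c:ℝ) + 1) * ((c:ℝ) + 1) = (c:ℝ) :=
      div_mul_cancel₀ _ (by linarith)
    nlinarith
  refine ⟨?_, ⟨?_, hfwd⟩, hge⟩
  · constructor
    · intro hlt
      by_contra h0
      by_cases hp : (∀ i, z i = 0) ∧ (∀ j, z' j = 1)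
      · exact h0 (hfwd hp)
      · linarith [hge hp]
    · intro h0; rw [h0]; norm_num
  · intro h0
    by_contra hp
    have := hge hp
    linarith
end
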